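/- Let α = (α_n)_{n≥0} be a bounded sequence of positive real numbers, let W_α be the associated unilateral weighted shift on ℓ²(ℤ≥0), and let λ ∈ (0,1). Then {2√(λ-λ²)·γ : γ ∈ σ(W_α)} ⊆ σ(M_λ(W_α)), where M_λ(W_α) is the unilateral weighted shift with weight sequence (λα_n + (1-λ)α_{n+1})_{n≥0} and σ denotes the spectrum. In particular, 2√(λ-λ²)·r(W_α) ≤ r(M_λ(W_α)), where r denotes the spectral radius. -/

import Mathlib

/-!
Write `β` for the weights of `M_λ(W_α)` and `c = 2√(λ - λ²)`. By AM-GM, `c² α_n α_{n+1} ≤ β_n²`;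
multiplying these along a run of consecutive indices gives `c^n ‖W^{n+1}‖ ≤ (sup α) ‖M^n‖`, and
Gelfand's formula turns this into `c r(W) ≤ r(M)`. The spectrum of a weighted shift is the closed
disc of radius its spectral radius: outside the spectrum, the coordinates of the resolvent applied
to `e_k` are the products `∏_{j<n} β_{k+j} / z^{n+1}`, which bounds `‖M^n‖` by `C |z|^n`. Hence
`c σ(W) ⊆ c · closedBall 0 r(W) ⊆ closedBall 0 r(M) = σ(M)`.
-/

open ContinuousLinearMap
open Filter Topology

section SpectralRadius

variable {A : Type*} [NormedRing A] [NormedAlgebra ℂ A] [CompleteSpace A] [NormOneClass A]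

lemma spectralRadius_ne_top (a : A) : spectralRadius ℂ a ≠ ⊤ :=
  ((spectrum.spectralRadius_le_nnnorm a).trans_lt ENNReal.coe_lt_top).ne

lemma tendsto_norm_pow_rpow_toReal_spectralRadius (a : A) :
    Tendsto (fun n : ℕ => ‖a ^ n‖ ^ (1 / n : ℝ)) atTop (𝓝 (spectralRadius ℂ a).toReal) := by
  have h := (ENNReal.tendsto_toReal (spectralRadius_ne_top a)).comp
    (spectrum.pow_norm_pow_one_div_tendsto_nhds_spectralRadius a)
  refine h.congr fun n => ?_
  simp [Function.comp_apply, ENNReal.toReal_ofReal, Real.rpow_nonneg]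

lemma tendsto_rpow_one_div_natCast {K : ℝ} (hK : 0 < K) :
    Tendsto (fun n : ℕ => K ^ (1 / n : ℝ)) atTop (𝓝 1) := by
  have := (Real.continuousAt_const_rpow hK.ne').tendsto.comp tendsto_one_div_atTop_nhds_zero_nat
  simpa [Function.comp_def] using this

lemma toReal_spectralRadius_le_of_norm_pow_le {a : A} {C b : ℝ} (hb : 0 ≤ b)
    (h : ∀ n, ‖a ^ n‖ ≤ C * b ^ n) : (spectralRadius ℂ a).toReal ≤ b := by
  have hC : 0 < C := zero_lt_one.trans_le (by simpa using h 0)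
  have hlim : Tendsto (fun n : ℕ => C ^ (1 / n : ℝ) * b) atTop (𝓝 b) := by
    simpa using (tendsto_rpow_one_div_natCast hC).mul_const b
  refine le_of_tendsto_of_tendsto (tendsto_norm_pow_rpow_toReal_spectralRadius a) hlim ?_
  filter_upwards [eventually_ne_atTop 0] with n hn
  calc ‖a ^ n‖ ^ (1 / n : ℝ) ≤ (C * b ^ n) ^ (1 / n : ℝ) := by gcongr; exact h n
    _ = C ^ (1 / n : ℝ) * b := by
      rw [Real.mul_rpow hC.le (by positivity), one_div, Real.pow_rpow_inv_natCast hb hn]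

lemma le_toReal_spectralRadius_of_pow_mul_le {a : A} {t K : ℝ} (ht : 0 ≤ t) (hK : 0 < K)
    (h : ∀ n, t ^ n * K ≤ ‖a ^ n‖) : t ≤ (spectralRadius ℂ a).toReal := by
  have hlim : Tendsto (fun n : ℕ => t * K ^ (1 / n : ℝ)) atTop (𝓝 t) := by
    simpa using (tendsto_rpow_one_div_natCast hK).const_mul t
  refine le_of_tendsto_of_tendsto hlim (tendsto_norm_pow_rpow_toReal_spectralRadius a) ?_
  filter_upwards [eventually_ne_atTop 0] with n hn
  calc t * K ^ (1 / n : ℝ) = (t ^ n * K) ^ (1 / n : ℝ) := by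
        rw [Real.mul_rpow (by positivity) hK.le, one_div, Real.pow_rpow_inv_natCast ht hn]
    _ ≤ ‖a ^ n‖ ^ (1 / n : ℝ) := by gcongr; exact h n

lemma toReal_spectralRadius_pow_le_norm_pow (a : A) (n : ℕ) :
    (spectralRadius ℂ a).toReal ^ n ≤ ‖a ^ n‖ := by
  have := NormOneClass.nontrivial (G := A)
  rw [← ENNReal.toReal_pow, ← coe_nnnorm]
  exact ENNReal.toReal_le_coe_of_le_coe
    ((spectrum.spectralRadius_pow_le' a n).trans (spectrum.spectralRadius_le_nnnorm _))

lemma mul_toReal_spectralRadius_le {a b : A} {c K : ℝ} (hc : 0 ≤ c) (hK : 0 < K)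
    (h : ∀ n, c ^ n * ‖a ^ (n + 1)‖ ≤ K * ‖b ^ n‖) :
    c * (spectralRadius ℂ a).toReal ≤ (spectralRadius ℂ b).toReal := by
  set r := (spectralRadius ℂ a).toReal
  rcases (ENNReal.toReal_nonneg (a := spectralRadius ℂ a)).eq_or_lt with hr | hr
  · simp [r, ← hr]
  refine le_toReal_spectralRadius_of_pow_mul_le (by positivity) (div_pos hr hK) fun n => ?_
  calc (c * r) ^ n * (r / K) = c ^ n * r ^ (n + 1) / K := by ring
    _ ≤ c ^ n * ‖a ^ (n + 1)‖ / K := by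
      gcongr; exact toReal_spectralRadius_pow_le_norm_pow a (n + 1)
    _ ≤ ‖b ^ n‖ := by rw [div_le_iff₀ hK]; linarith [h n]

lemma norm_le_toReal_spectralRadius {a : A} {z : ℂ} (hz : z ∈ spectrum ℂ a) :
    ‖z‖ ≤ (spectralRadius ℂ a).toReal := by
  have := ENNReal.toReal_mono (spectralRadius_ne_top a)
    (le_iSup₂ (f := fun k (_ : k ∈ spectrum ℂ a) => (‖k‖₊ : ENNReal)) z hz)
  simpa using this

end SpectralRadius

local notation "ℓ²" => lp (fun _ : ℕ => ℂ) 2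

instance : Nontrivial ℓ² :=
  ⟨⟨lp.single 2 0 1, 0, fun h => by simpa using congrArg norm h⟩⟩

-- `m` is the step of the shift, so that powers of weighted shifts are again weighted shifts.
def IsWeightedShift (T : ℓ² →L[ℂ] ℓ²) (m : ℕ) (v : ℕ → ℂ) : Prop :=
  ∀ k, T (lp.single 2 k 1) = v k • lp.single 2 (k + m) 1

theorem pow_succ_mul_eq_prod_of_recurrence {K : Type*} [Field K] {x v : ℕ → K} {z : K}
    (hz : z ≠ 0) {k : ℕ} (h0 : z * x 0 = if 0 = k then 1 else 0)
    (hsucc : ∀ i, z * x (i + 1) - v i * x i = if i + 1 = k then 1 else 0) (n : ℕ) :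
    z ^ (n + 1) * x (k + n) = ∏ j ∈ Finset.range n, v (k + j) := by
  have hlow : ∀ i < k, x i = 0 := by
    intro i
    induction i with
    | zero =>
      intro hk
      simpa [hz, hk.ne] using h0
    | succ i ih =>
      intro hk
      have h := hsucc i
      rw [ih (by omega), if_neg (by omega), mul_zero, sub_zero] at h
      exact (mul_eq_zero.mp h).resolve_left hz
  induction n with
  | zero =>
    cases k with
    | zero => simpa using h0
    | succ k => simpa [hlow k (by omega)] using hsucc k
  | succ n ih =>
    have h := hsucc (k + n)
    rw [if_neg (by omega), sub_eq_zero] at h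
    calc z ^ (n + 1 + 1) * x (k + (n + 1)) = z ^ (n + 1) * (z * x (k + n + 1)) := by
          rw [← add_assoc]; ring
      _ = v (k + n) * (z ^ (n + 1) * x (k + n)) := by rw [h]; ring
      _ = ∏ j ∈ Finset.range (n + 1), v (k + j) := by rw [ih, Finset.prod_range_succ, mul_comm]

namespace IsWeightedShift

variable {T : ℓ² →L[ℂ] ℓ²} {m : ℕ} {v : ℕ → ℂ}

theorem hasSum_apply (hT : IsWeightedShift T m v) (x : ℓ²) :
    HasSum (fun k => (v k * x k) • lp.single 2 (k + m) (1 : ℂ)) (T x) := by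
  convert (lp.hasSum_single (by simp) x).mapL T using 2 with k
  have hsingle : lp.single 2 k (x k) = x k • (lp.single 2 k 1 : ℓ²) := by
    rw [← lp.single_smul, smul_eq_mul, mul_one]
  rw [hsingle, map_smul, hT, smul_smul, mul_comm]

theorem hasSum_apply_apply (hT : IsWeightedShift T m v) (x : ℓ²) (i : ℕ) :
    HasSum (fun k => if i = k + m then v k * x k else 0) (T x i) := by
  simpa [lp.evalCLM, Pi.single_apply] using
    (hT.hasSum_apply x).mapL (lp.evalCLM ℂ (fun _ : ℕ => ℂ) 2 i)

theorem apply_add (hT : IsWeightedShift T m v) (x : ℓ²) (i : ℕ) : T x (i + m) = v i * x i := by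
  have h := hT.hasSum_apply_apply x (i + m)
  simp only [add_left_inj] at h
  exact (h.unique (hasSum_single i fun k hk => if_neg (Ne.symm hk))).trans (if_pos rfl)

theorem apply_of_lt (hT : IsWeightedShift T m v) (x : ℓ²) {i : ℕ} (hi : i < m) : T x i = 0 := by
  have h := hT.hasSum_apply_apply x i
  simp only [show ∀ k, i ≠ k + m by omega, if_false] at h
  exact h.unique hasSum_zero

theorem norm_le (hT : IsWeightedShift T m v) {s : ℝ} (hv : ∀ k, ‖v k‖ ≤ s) : ‖T‖ ≤ s := by
  have hs : 0 ≤ s := (norm_nonneg _).trans (hv 0)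
  refine T.opNorm_le_bound hs fun x => lp.norm_le_of_tsum_le (by simp) (by positivity) ?_
  have hx : Summable fun i => ‖x i‖ ^ (2 : ℝ) := by
    simpa using (lp.memℓp x).summable (by simp)
  have hsupp : Function.support (fun i => ‖T x i‖ ^ (2 : ℝ)) ⊆ Set.range (· + m) := by
    intro i hi
    by_contra h
    have him : i < m := by
      by_contra h'
      exact h ⟨i - m, Nat.sub_add_cancel (not_lt.mp h')⟩
    exact hi (by simp [hT.apply_of_lt x him])
  have hle : ∀ i, ‖T x (i + m)‖ ^ (2 : ℝ) ≤ s ^ (2 : ℝ) * ‖x i‖ ^ (2 : ℝ) := fun i => by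
    rw [hT.apply_add, norm_mul, Real.mul_rpow (norm_nonneg _) (norm_nonneg _)]
    gcongr
    exact hv i
  simp only [ENNReal.toReal_ofNat]
  rw [← (add_left_injective m).tsum_eq hsupp]
  calc ∑' i, ‖T x (i + m)‖ ^ (2 : ℝ) ≤ ∑' i, s ^ (2 : ℝ) * ‖x i‖ ^ (2 : ℝ) := by
        refine Summable.tsum_le_tsum hle (.of_nonneg_of_le (fun _ => by positivity) hle ?_) ?_ <;>
          exact hx.mul_left _
    _ = (s * ‖x‖) ^ (2 : ℝ) := by
        rw [tsum_mul_left, Real.mul_rpow hs (norm_nonneg _), ← ENNReal.toReal_ofNat,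
          lp.norm_rpow_eq_tsum (by simp)]

theorem norm_weight_le (hT : IsWeightedShift T m v) (k : ℕ) : ‖v k‖ ≤ ‖T‖ := by
  calc ‖v k‖ = ‖T (lp.single 2 k 1)‖ := by
        rw [hT k, norm_smul, lp.norm_single (by norm_num), norm_one, mul_one]
    _ ≤ ‖T‖ * ‖(lp.single 2 k 1 : ℓ²)‖ := T.le_opNorm _
    _ = ‖T‖ := by rw [lp.norm_single (by norm_num), norm_one, mul_one]

theorem pow (hT : IsWeightedShift T 1 v) (n : ℕ) :
    IsWeightedShift (T ^ n) n (fun k => ∏ j ∈ Finset.range n, v (k + j)) := by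
  induction n with
  | zero => intro k; simp
  | succ n ih =>
    intro k
    rw [pow_succ', mul_apply_eq_comp, ih, map_smul, hT, smul_smul,
      ← Finset.prod_range_succ, add_assoc]

theorem zero_mem_spectrum (hT : IsWeightedShift T m v) (hm : 0 < m) : 0 ∈ spectrum ℂ T := by
  rw [spectrum.zero_mem_iff]
  rintro ⟨u, rfl⟩
  have h : u.val (u⁻¹.val (lp.single 2 0 1)) = lp.single 2 0 1 := by
    rw [← mul_apply_eq_comp, u.mul_inv, one_apply_eq_self]
  simpa [hT.apply_of_lt _ hm] using congrArg (fun y : ℓ² => y 0) h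

theorem pow_succ_mul_apply_eq_prod (hT : IsWeightedShift T 1 v) {z : ℂ} (hz : z ≠ 0) {x : ℓ²}
    {k : ℕ} (hx : z • x - T x = lp.single 2 k 1) (n : ℕ) :
    z ^ (n + 1) * x (k + n) = ∏ j ∈ Finset.range n, v (k + j) := by
  have hcoord (i : ℕ) : z * x i - T x i = if i = k then 1 else 0 := by
    have h := congrArg (fun y : ℓ² => y i) hx
    simp only [lp.single_apply, Pi.single_apply] at h
    exact h
  exact pow_succ_mul_eq_prod_of_recurrence hz (by simpa [hT.apply_of_lt x one_pos] using hcoord 0)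
    (fun i => by simpa [hT.apply_add x i] using hcoord (i + 1)) n

theorem norm_pow_le_of_notMem_spectrum (hT : IsWeightedShift T 1 v) {z : ℂ}
    (hz : z ∉ spectrum ℂ T) : ∃ C, ∀ n, ‖T ^ n‖ ≤ C * ‖z‖ ^ n := by
  have hz0 : z ≠ 0 := by
    rintro rfl
    exact hz (hT.zero_mem_spectrum one_pos)
  obtain ⟨u, hu⟩ := spectrum.notMem_iff.mp hz
  refine ⟨‖u⁻¹.val‖ * ‖z‖, fun n => (hT.pow n).norm_le fun k => ?_⟩
  set x := u⁻¹.val (lp.single 2 k 1)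
  have hx : z • x - T x = lp.single 2 k 1 := by
    have h := congrArg (fun S : ℓ² →L[ℂ] ℓ² => S (lp.single 2 k 1)) u.mul_inv
    simpa [hu, x, Algebra.algebraMap_eq_smul_one] using h
  have hxk : ‖x (k + n)‖ ≤ ‖u⁻¹.val‖ := calc
    ‖x (k + n)‖ ≤ ‖x‖ := lp.norm_apply_le_norm (by norm_num) x (k + n)
    _ ≤ ‖u⁻¹.val‖ * ‖(lp.single 2 k 1 : ℓ²)‖ := u⁻¹.val.le_opNorm _
    _ = ‖u⁻¹.val‖ := by rw [lp.norm_single (by norm_num), norm_one, mul_one]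
  rw [← hT.pow_succ_mul_apply_eq_prod hz0 hx n, norm_mul, norm_pow]
  calc ‖z‖ ^ (n + 1) * ‖x (k + n)‖ ≤ ‖z‖ ^ (n + 1) * ‖u⁻¹.val‖ := by gcongr
    _ = ‖u⁻¹.val‖ * ‖z‖ * ‖z‖ ^ n := by ring

theorem toReal_spectralRadius_le_of_notMem_spectrum (hT : IsWeightedShift T 1 v) {z : ℂ}
    (hz : z ∉ spectrum ℂ T) : (spectralRadius ℂ T).toReal ≤ ‖z‖ := by
  obtain ⟨C, hC⟩ := hT.norm_pow_le_of_notMem_spectrum hz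
  exact toReal_spectralRadius_le_of_norm_pow_le (norm_nonneg z) hC

theorem mem_spectrum_of_norm_le (hT : IsWeightedShift T 1 v) {w : ℂ}
    (hw : ‖w‖ ≤ (spectralRadius ℂ T).toReal) : w ∈ spectrum ℂ T := by
  have hball : Metric.ball 0 (spectralRadius ℂ T).toReal ⊆ spectrum ℂ T := fun u hu =>
    by_contra fun h =>
      (mem_ball_zero_iff.mp hu).not_ge (hT.toReal_spectralRadius_le_of_notMem_spectrum h)
  rcases (ENNReal.toReal_nonneg (a := spectralRadius ℂ T)).eq_or_lt with hr | hr
  · rw [norm_le_zero_iff.mp (hw.trans hr.ge)]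
    exact hT.zero_mem_spectrum one_pos
  · refine (spectrum.isClosed T).closure_subset_iff.mpr hball ?_
    rw [closure_ball 0 hr.ne']
    exact mem_closedBall_zero_iff.mpr hw

end IsWeightedShift

theorem pow_mul_prod_range_succ_le {a b : ℕ → ℝ} {c B : ℝ} (ha : ∀ i, 0 ≤ a i)
    (haB : ∀ i, a i ≤ B) (hb : ∀ i, 0 ≤ b i) (hab : ∀ i, c ^ 2 * (a i * a (i + 1)) ≤ b i ^ 2)
    (n : ℕ) : c ^ n * ∏ j ∈ Finset.range (n + 1), a j ≤ B * ∏ j ∈ Finset.range n, b j := by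
  -- squaring pairs every factor with its successor, leaving the two end factors over
  have hsq : (∏ j ∈ Finset.range (n + 1), a j) ^ 2
      = (∏ j ∈ Finset.range n, a j * a (j + 1)) * (a 0 * a n) := by
    rw [sq]
    nth_rewrite 1 [Finset.prod_range_succ]
    rw [Finset.prod_range_succ', Finset.prod_mul_distrib]
    ring
  have hprod : (c ^ n) ^ 2 * ∏ j ∈ Finset.range n, a j * a (j + 1)
      ≤ (∏ j ∈ Finset.range n, b j) ^ 2 := calc
    _ = ∏ j ∈ Finset.range n, c ^ 2 * (a j * a (j + 1)) := by
      simp only [Finset.prod_mul_distrib, Finset.prod_const, Finset.card_range]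
      ring
    _ ≤ ∏ j ∈ Finset.range n, b j ^ 2 :=
      Finset.prod_le_prod (fun i _ => by have := ha i; have := ha (i + 1); positivity)
        (fun i _ => hab i)
    _ = (∏ j ∈ Finset.range n, b j) ^ 2 := Finset.prod_pow _ _ _
  have hB : 0 ≤ B := (ha 0).trans (haB 0)
  refine le_of_sq_le_sq ?_ (mul_nonneg hB (Finset.prod_nonneg fun i _ => hb i))
  calc (c ^ n * ∏ j ∈ Finset.range (n + 1), a j) ^ 2
      = (c ^ n) ^ 2 * (∏ j ∈ Finset.range n, a j * a (j + 1)) * (a 0 * a n) := by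
        rw [mul_pow, hsq, mul_assoc]
    _ ≤ (∏ j ∈ Finset.range n, b j) ^ 2 * (B * B) :=
        mul_le_mul hprod (mul_le_mul (haB 0) (haB n) (ha n) hB) (mul_nonneg (ha 0) (ha n))
          (sq_nonneg _)
    _ = (B * ∏ j ∈ Finset.range n, b j) ^ 2 := by ring

theorem IsWeightedShift.pow_mul_norm_pow_succ_le {T S : ℓ² →L[ℂ] ℓ²} {v w : ℕ → ℂ}
    (hT : IsWeightedShift T 1 v) (hS : IsWeightedShift S 1 w) {c B : ℝ} (hc : 0 < c)
    (hB : ∀ i, ‖v i‖ ≤ B) (hvw : ∀ i, c ^ 2 * (‖v i‖ * ‖v (i + 1)‖) ≤ ‖w i‖ ^ 2) (n : ℕ) :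
    c ^ n * ‖T ^ (n + 1)‖ ≤ B * ‖S ^ n‖ := by
  have hB0 : 0 ≤ B := (norm_nonneg _).trans (hB 0)
  rw [← le_div_iff₀' (by positivity)]
  refine (hT.pow (n + 1)).norm_le fun k => ?_
  rw [le_div_iff₀' (by positivity), norm_prod]
  calc c ^ n * ∏ j ∈ Finset.range (n + 1), ‖v (k + j)‖
      ≤ B * ∏ j ∈ Finset.range n, ‖w (k + j)‖ :=
        pow_mul_prod_range_succ_le (fun _ => norm_nonneg _) (fun _ => hB _)
          (fun _ => norm_nonneg _) (fun j => by simpa [add_assoc] using hvw (k + j)) n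
    _ ≤ B * ‖S ^ n‖ := by
        rw [← norm_prod]
        gcongr
        exact (hS.pow n).norm_weight_le k

/-- `2√(λ-λ²)·σ(W_α) ⊆ σ(M_λ(W_α))` and `2√(λ-λ²)·r(W_α) ≤ r(M_λ(W_α))` for a
unilateral weighted shift `W_α`. -/
theorem stmt4 (α : ℕ → ℝ) (hpos : ∀ n, 0 < α n) (hbdd : BddAbove (Set.range α))
    (l : ℝ) (hl : l ∈ Set.Ioo (0 : ℝ) 1)
    (W M : lp (fun _ : ℕ => ℂ) 2 →L[ℂ] lp (fun _ : ℕ => ℂ) 2)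
    (hW : ∀ n : ℕ, W (lp.single 2 n (1 : ℂ)) = ((α n : ℝ) : ℂ) • lp.single 2 (n + 1) (1 : ℂ))
    (hM : ∀ n : ℕ, M (lp.single 2 n (1 : ℂ)) =
      ((l * α n + (1 - l) * α (n + 1) : ℝ) : ℂ) • lp.single 2 (n + 1) (1 : ℂ)) :
    (fun γ : ℂ => ((2 * Real.sqrt (l - l ^ 2) : ℝ) : ℂ) * γ) '' spectrum ℂ W ⊆ spectrum ℂ M ∧
    2 * Real.sqrt (l - l ^ 2) * (spectralRadius ℂ W).toReal ≤ (spectralRadius ℂ M).toReal := by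
  obtain ⟨hl0, hl1⟩ := hl
  obtain ⟨B, hB⟩ := hbdd
  have hWshift : IsWeightedShift W 1 (fun n => α n) := hW
  have hMshift : IsWeightedShift M 1 (fun n => ((l * α n + (1 - l) * α (n + 1) : ℝ) : ℂ)) := hM
  set c := 2 * Real.sqrt (l - l ^ 2)
  have hc : 0 < c := by
    have : 0 < Real.sqrt (l - l ^ 2) := Real.sqrt_pos.mpr (by nlinarith)
    positivity
  have hamgm (n : ℕ) : c ^ 2 * (‖(α n : ℂ)‖ * ‖(α (n + 1) : ℂ)‖)
      ≤ ‖((l * α n + (1 - l) * α (n + 1) : ℝ) : ℂ)‖ ^ 2 := by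
    have := hpos n
    have := hpos (n + 1)
    simp only [Complex.norm_real, Real.norm_eq_abs, sq_abs, abs_of_pos (hpos _)]
    rw [mul_pow, Real.sq_sqrt (by nlinarith)]
    nlinarith [sq_nonneg (l * α n - (1 - l) * α (n + 1))]
  have hrad : c * (spectralRadius ℂ W).toReal ≤ (spectralRadius ℂ M).toReal :=
    mul_toReal_spectralRadius_le hc.le ((hpos 0).trans_le (hB ⟨0, rfl⟩))
      (hWshift.pow_mul_norm_pow_succ_le hMshift hc
        (fun i => by simpa [abs_of_pos (hpos i)] using hB ⟨i, rfl⟩) hamgm)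
  refine ⟨?_, hrad⟩
  rintro _ ⟨γ, hγ, rfl⟩
  refine hMshift.mem_spectrum_of_norm_le ?_
  rw [norm_mul, Complex.norm_real, Real.norm_of_nonneg hc.le]
  exact (mul_le_mul_of_nonneg_left (norm_le_toReal_spectralRadius hγ) hc.le).trans hrad
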